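/- For every smooth ϱ : ℝ² → ℝ and every i ∈ {1,2}, Σ ε^{i i₂} ε^{j₁ j₂} ε^{k₁ k₂} (∂_{i₂}∂_{j₁}∂_{k₁}ϱ) · ϱ · (∂_{j₂}∂_{k₂}ϱ) = Σ ε^{i i₂} ε^{j₁ j₂} ε^{k₁ k₂} ϱ · (∂_{j₁}∂_{k₁}ϱ)(∂_{i₂}∂_{j₂}∂_{k₂}ϱ), both sums over all i₂, j₁, j₂, k₁, k₂ ∈ {1,2}; moreover both sides equal the explicit vector field with components (ϱ ϱ_yy ϱ_xxy − 2 ϱ ϱ_xy ϱ_xyy + ϱ ϱ_xx ϱ_yyy) for i = 1 and (−ϱ ϱ_yy ϱ_xxx + 2 ϱ ϱ_xy ϱ_xxy − ϱ ϱ_xx ϱ_xyy) for i = 2. Equivalently, the Kontsevich graphs Γ₁₄^{2D} = [0,1;1,3;1,3] and Γ₃^{2D} = [0,3;2,3;2,3] are synonyms: φ(Γ₁₄^{2D}) = φ(Γ₃^{2D}). -/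

import Mathlib

/-- The partial derivative `∂/∂xⁱ` of a function on `ℝ² ≃ (Fin 2 → ℝ)`,
with `x = x¹ ↔ i = 0` and `y = x² ↔ i = 1`. -/
noncomputable def pd (i : Fin 2) (f : (Fin 2 → ℝ) → ℝ) : (Fin 2 → ℝ) → ℝ :=
  fun x => fderiv ℝ f x (Pi.single i 1)

/-- The two-index Levi-Civita symbol: `ε⁰¹ = 1 = −ε¹⁰`, `ε⁰⁰ = ε¹¹ = 0`
(indices `1, 2` of the paper are `0, 1` here). -/
def eps (i j : Fin 2) : ℝ := (j : ℝ) - (i : ℝ)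

/-- `φ(Γ₁₄^{2D})`, the graph vector field of the Kontsevich graph `[0,1;1,3;1,3]`:
`Σ ε^{i i₂} ε^{j₁ j₂} ε^{k₁ k₂} (∂_{i₂}∂_{j₁}∂_{k₁}ϱ) · ϱ · (∂_{j₂}∂_{k₂}ϱ)`. -/
noncomputable def Phi14 (ϱ : (Fin 2 → ℝ) → ℝ) (i : Fin 2) (x : Fin 2 → ℝ) : ℝ :=
  ∑ i₂ : Fin 2, ∑ j₁ : Fin 2, ∑ j₂ : Fin 2, ∑ k₁ : Fin 2, ∑ k₂ : Fin 2,
    eps i i₂ * eps j₁ j₂ * eps k₁ k₂ *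
      (pd i₂ (pd j₁ (pd k₁ ϱ)) x * ϱ x * pd j₂ (pd k₂ ϱ) x)

/-- `φ(Γ₃^{2D})`, the graph vector field of the Kontsevich graph `[0,3;2,3;2,3]`:
`Σ ε^{i i₂} ε^{j₁ j₂} ε^{k₁ k₂} ϱ · (∂_{j₁}∂_{k₁}ϱ)(∂_{i₂}∂_{j₂}∂_{k₂}ϱ)`. -/
noncomputable def Phi3 (ϱ : (Fin 2 → ℝ) → ℝ) (i : Fin 2) (x : Fin 2 → ℝ) : ℝ :=
  ∑ i₂ : Fin 2, ∑ j₁ : Fin 2, ∑ j₂ : Fin 2, ∑ k₁ : Fin 2, ∑ k₂ : Fin 2,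
    eps i i₂ * eps j₁ j₂ * eps k₁ k₂ *
      (ϱ x * pd j₁ (pd k₁ ϱ) x * pd i₂ (pd j₂ (pd k₂ ϱ)) x)

lemma pd_contDiff {f : (Fin 2 → ℝ) → ℝ} (hf : ContDiff ℝ (⊤ : ℕ∞) f) (i : Fin 2) :
    ContDiff ℝ (⊤ : ℕ∞) (pd i f) := by
  have h : ContDiff ℝ (⊤ : ℕ∞) (fderiv ℝ f) := hf.fderiv_right (by simp)
  exact h.clm_apply contDiff_const

lemma pd_comm {f : (Fin 2 → ℝ) → ℝ} (hf : ContDiff ℝ (⊤ : ℕ∞) f) (a b : Fin 2) :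
    pd a (pd b f) = pd b (pd a f) := by
  funext x
  have hsymm : IsSymmSndFDerivAt ℝ f x :=
    hf.contDiffAt.isSymmSndFDerivAt (by simp [minSmoothness_of_isRCLikeNormedField]; exact WithTop.coe_le_coe.mpr (le_top : (2:ℕ∞) ≤ ⊤))
  have hF : ContDiff ℝ (⊤ : ℕ∞) (fderiv ℝ f) := hf.fderiv_right (by simp)
  have hd : DifferentiableAt ℝ (fderiv ℝ f) x :=
    (hF.differentiable (by simp)) x
  have key : ∀ u v : Fin 2 → ℝ,
      fderiv ℝ (fun y => fderiv ℝ f y v) x u = fderiv ℝ (fderiv ℝ f) x u v := by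
    intro u v
    have := fderiv_clm_apply (c := fderiv ℝ f) (u := fun _ => v) hd
      (differentiableAt_const v)
    simp [this]
  have hpd : ∀ i : Fin 2, pd i f = fun y => fderiv ℝ f y (Pi.single i 1) := fun _ => rfl
  simp only [pd, hpd]
  rw [key, key, hsymm]

/-- For every smooth `ϱ : ℝ² → ℝ` and every free index `i`,
`φ(Γ₁₄^{2D}) = φ(Γ₃^{2D})` (the Kontsevich graphs `[0,1;1,3;1,3]` and `[0,3;2,3;2,3]`
are synonyms), and moreover both sides equal the explicit vector field with
components `ϱϱ_yy ϱ_xxy − 2ϱϱ_xy ϱ_xyy + ϱϱ_xx ϱ_yyy` (for `i = 1`) and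
`−ϱϱ_yy ϱ_xxx + 2ϱϱ_xy ϱ_xxy − ϱϱ_xx ϱ_xyy` (for `i = 2`). -/
theorem synonym_gamma14_eq_gamma3
    (ϱ : (Fin 2 → ℝ) → ℝ) (hϱ : ContDiff ℝ (⊤ : ℕ∞) ϱ) :
    (∀ i : Fin 2, ∀ x : Fin 2 → ℝ, Phi14 ϱ i x = Phi3 ϱ i x) ∧
    (∀ x : Fin 2 → ℝ,
      Phi14 ϱ 0 x =
        ϱ x * pd 1 (pd 1 ϱ) x * pd 0 (pd 0 (pd 1 ϱ)) x
          - 2 * ϱ x * pd 0 (pd 1 ϱ) x * pd 0 (pd 1 (pd 1 ϱ)) x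
          + ϱ x * pd 0 (pd 0 ϱ) x * pd 1 (pd 1 (pd 1 ϱ)) x
      ∧ Phi14 ϱ 1 x =
        -(ϱ x) * pd 1 (pd 1 ϱ) x * pd 0 (pd 0 (pd 0 ϱ)) x
          + 2 * ϱ x * pd 0 (pd 1 ϱ) x * pd 0 (pd 0 (pd 1 ϱ)) x
          - ϱ x * pd 0 (pd 0 ϱ) x * pd 0 (pd 1 (pd 1 ϱ)) x) := by
  have hx : ∀ i : Fin 2, ContDiff ℝ (⊤ : ℕ∞) (pd i ϱ) := fun i => pd_contDiff hϱ i
  have h2 : pd 1 (pd 0 ϱ) = pd 0 (pd 1 ϱ) := pd_comm hϱ 1 0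
  have h3a : pd 0 (pd 1 (pd 0 ϱ)) = pd 0 (pd 0 (pd 1 ϱ)) := by rw [h2]
  have h3b : pd 1 (pd 0 (pd 0 ϱ)) = pd 0 (pd 0 (pd 1 ϱ)) := by
    rw [pd_comm (hx 0) 1 0, h3a]
  have h3d : pd 1 (pd 0 (pd 1 ϱ)) = pd 0 (pd 1 (pd 1 ϱ)) := pd_comm (hx 1) 1 0
  have h3c : pd 1 (pd 1 (pd 0 ϱ)) = pd 0 (pd 1 (pd 1 ϱ)) := by rw [h2, h3d]
  have key : ∀ x : Fin 2 → ℝ, (Phi14 ϱ 0 x = Phi3 ϱ 0 x ∧ Phi14 ϱ 1 x = Phi3 ϱ 1 x)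
      ∧ (Phi14 ϱ 0 x =
        ϱ x * pd 1 (pd 1 ϱ) x * pd 0 (pd 0 (pd 1 ϱ)) x
          - 2 * ϱ x * pd 0 (pd 1 ϱ) x * pd 0 (pd 1 (pd 1 ϱ)) x
          + ϱ x * pd 0 (pd 0 ϱ) x * pd 1 (pd 1 (pd 1 ϱ)) x
      ∧ Phi14 ϱ 1 x =
        -(ϱ x) * pd 1 (pd 1 ϱ) x * pd 0 (pd 0 (pd 0 ϱ)) x
          + 2 * ϱ x * pd 0 (pd 1 ϱ) x * pd 0 (pd 0 (pd 1 ϱ)) x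
          - ϱ x * pd 0 (pd 0 ϱ) x * pd 0 (pd 1 (pd 1 ϱ)) x) := by
    intro x
    simp only [Phi14, Phi3, Fin.sum_univ_two, eps, h2, h3a, h3b, h3c, h3d]
    norm_num
    constructor
    · constructor <;> ring
    · constructor <;> ring
  refine ⟨fun i x => ?_, fun x => (key x).2⟩
  fin_cases i
  · exact (key x).1.1
  · exact (key x).1.2
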